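/- Every element g of Thompson's group F can be written as g = g₁ · g₂⁻¹ with g₁, g₂ in the positive monoid F₊. -/
import Mathlib


/-- Relators of Thompson's group `F`: `xₙ·xₖ·xₙ₊₁⁻¹·xₖ⁻¹` for `k < n`. -/
def thompsonRels : Set (FreeGroup ℕ) :=
  {r | ∃ n k : ℕ, k < n ∧
    r = FreeGroup.of n * FreeGroup.of k * (FreeGroup.of (n + 1))⁻¹ * (FreeGroup.of k)⁻¹}

/-- Thompson's group `F` as a presented group. -/
abbrev ThompsonF : Type := PresentedGroup thompsonRels

/-- The generator `xᵢ` of Thompson's group `F`. -/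
def x (i : ℕ) : ThompsonF := PresentedGroup.of i

/-- The positive monoid `F₊`: submonoid of `F` generated by the `xᵢ`. -/
def Fpos : Submonoid ThompsonF := Submonoid.closure (Set.range x)

lemma thompson_rel {k n : ℕ} (h : k < n) : x n * x k = x k * x (n + 1) := by
  have hr : (FreeGroup.of n * FreeGroup.of k * (FreeGroup.of (n + 1))⁻¹ *
      (FreeGroup.of k)⁻¹ : FreeGroup ℕ) ∈ thompsonRels := ⟨n, k, h, rfl⟩
  have h1 : (PresentedGroup.mk thompsonRels) (FreeGroup.of n * FreeGroup.of k *
      (FreeGroup.of (n + 1))⁻¹ * (FreeGroup.of k)⁻¹) = 1 := by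
    exact (QuotientGroup.eq_one_iff _).mpr (Subgroup.subset_normalClosure hr)
  simp only [map_mul, map_inv] at h1
  have h2 : x n * x k * (x (n + 1))⁻¹ * (x k)⁻¹ = 1 := h1
  rw [mul_inv_eq_one, mul_inv_eq_iff_eq_mul] at h2
  exact h2

lemma x_mem_Fpos (i : ℕ) : x i ∈ Fpos := Submonoid.subset_closure ⟨i, rfl⟩

/-- Step: commuting one generator past a positive inverse. -/
lemma step (q : ThompsonF) (hq : q ∈ Fpos) :
    ∀ i : ℕ, (∃ j, ∃ q' ∈ Fpos, q⁻¹ * x i = x j * q'⁻¹) ∨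
      (∃ q' ∈ Fpos, q⁻¹ * x i = q'⁻¹) := by
  induction hq using Submonoid.closure_induction with
  | mem a ha =>
    obtain ⟨k, rfl⟩ := ha
    intro i
    rcases lt_trichotomy i k with hik | rfl | hik
    · -- i < k : x k⁻¹ * x i = x i * x (k+1)⁻¹
      left
      refine ⟨i, x (k + 1), x_mem_Fpos _, ?_⟩
      have h := thompson_rel hik
      rw [inv_mul_eq_iff_eq_mul, ← mul_assoc, h, mul_inv_cancel_right]
    · right
      exact ⟨1, one_mem _, by rw [inv_mul_cancel, inv_one]⟩
    · -- k < i : x k⁻¹ * x i = x (i+1) * x k⁻¹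
      left
      refine ⟨i + 1, x k, x_mem_Fpos _, ?_⟩
      have h := thompson_rel hik
      rw [inv_mul_eq_iff_eq_mul, ← mul_assoc, ← h, mul_inv_cancel_right]
  | one =>
    intro i
    left
    exact ⟨i, 1, one_mem _, by rw [inv_one, one_mul, mul_one]⟩
  | mul a b _ hb iha ihb =>
    intro i
    rcases iha i with ⟨j, qa, hqa, hja⟩ | ⟨qa, hqa, hja⟩
    · rcases ihb j with ⟨m, qb, hqb, hjb⟩ | ⟨qb, hqb, hjb⟩
      · left
        refine ⟨m, qa * qb, mul_mem hqa hqb, ?_⟩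
        have : (a * b)⁻¹ * x i = b⁻¹ * (a⁻¹ * x i) := by group
        rw [this, hja, ← mul_assoc, hjb]
        group
      · right
        refine ⟨qa * qb, mul_mem hqa hqb, ?_⟩
        have : (a * b)⁻¹ * x i = b⁻¹ * (a⁻¹ * x i) := by group
        rw [this, hja, ← mul_assoc, hjb]
        group
    · right
      refine ⟨qa * b, mul_mem hqa hb, ?_⟩
      have : (a * b)⁻¹ * x i = b⁻¹ * (a⁻¹ * x i) := by group
      rw [this, hja]
      group

/-- Ore condition: `q⁻¹ * p` rewrites as `p' * q'⁻¹`. -/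
lemma ore (p : ThompsonF) (hp : p ∈ Fpos) :
    ∀ q ∈ Fpos, ∃ p' ∈ Fpos, ∃ q' ∈ Fpos, q⁻¹ * p = p' * q'⁻¹ := by
  induction hp using Submonoid.closure_induction with
  | mem a ha =>
    obtain ⟨i, rfl⟩ := ha
    intro q hq
    rcases step q hq i with ⟨j, q', hq', h⟩ | ⟨q', hq', h⟩
    · exact ⟨x j, x_mem_Fpos _, q', hq', h⟩
    · exact ⟨1, one_mem _, q', hq', by rw [h]; group⟩
  | one =>
    intro q hq
    exact ⟨1, one_mem _, q, hq, by group⟩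
  | mul a b ha hb iha ihb =>
    intro q hq
    obtain ⟨pa, hpa, qa, hqa, hA⟩ := iha q hq
    obtain ⟨pb, hpb, qb, hqb, hB⟩ := ihb qa hqa
    refine ⟨pa * pb, mul_mem hpa hpb, qb, hqb, ?_⟩
    have : q⁻¹ * (a * b) = (q⁻¹ * a) * b := by group
    rw [this, hA, mul_assoc, hB]
    group

/-- Every element of Thompson's group `F` is a product `g₁·g₂⁻¹` with `g₁, g₂ ∈ F₊`. -/
theorem thompson_positive_decomposition :
    ∀ g : ThompsonF, ∃ g₁ g₂ : ThompsonF, g₁ ∈ Fpos ∧ g₂ ∈ Fpos ∧ g = g₁ * g₂⁻¹ := by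
  intro g
  have hgen : g ∈ Subgroup.closure (Set.range (PresentedGroup.of : ℕ → ThompsonF)) := by
    rw [PresentedGroup.closure_range_of]; trivial
  induction hgen using Subgroup.closure_induction with
  | mem a ha =>
    obtain ⟨i, rfl⟩ := ha
    exact ⟨x i, 1, x_mem_Fpos i, one_mem _, by rw [inv_one, mul_one]; rfl⟩
  | one => exact ⟨1, 1, one_mem _, one_mem _, by group⟩
  | mul a b _ _ iha ihb =>
    obtain ⟨p1, q1, hp1, hq1, rfl⟩ := iha
    obtain ⟨p2, q2, hp2, hq2, rfl⟩ := ihb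
    obtain ⟨p', hp', q', hq', h⟩ := ore p2 hp2 q1 hq1
    refine ⟨p1 * p', q2 * q', mul_mem hp1 hp', mul_mem hq2 hq', ?_⟩
    have : p1 * q1⁻¹ * (p2 * q2⁻¹) = p1 * (q1⁻¹ * p2) * q2⁻¹ := by group
    rw [this, h]
    group
  | inv a _ iha =>
    obtain ⟨p1, q1, hp1, hq1, rfl⟩ := iha
    exact ⟨q1, p1, hq1, hp1, by group⟩
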